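/- The category of polynomial functors has all small limits: for every small category J and every functor D from J to the category of functors Type → Type such that for each object j of J the functor D j is naturally isomorphic to the associated functor of some polynomial functor, the limit of D (computed pointwise in the functor category) is again naturally isomorphic to the associated functor of a polynomial functor; moreover, the position set of this limit polynomial is the limit over J of the position sets of the D j. -/

import Mathlib

open CategoryTheory

universe u

/-- The associated functor `Type u ⥤ Type u` of a polynomial functor. -/
def PFunctor.toFunctor (P : PFunctor.{u}) : Type u ⥤ Type u where
  obj X := P.Obj X
  map f := TypeCat.ofHom fun x => P.map f x
  map_id := by intro X; apply ConcreteCategory.hom_ext; intro x; exact P.id_map x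
  map_comp := by intro X Y Z f g; apply ConcreteCategory.hom_ext; intro x; exact (P.map_map f g x).symm

/-!
A natural transformation between polynomial functors is, by the Yoneda lemma, a map on
positions together with maps backwards on directions. A compatible family of elements
`⟨a j, g j⟩ : (P j).Obj X` is therefore a compatible family of positions `a` together with a
map into `X` from the colimit of the direction sets `(P j).B (a j)`. So the pointwise limit is
the polynomial functor whose positions are the limit of the position sets and whose directions
at `a` are that colimit. Evaluating at `PUnit` forgets the directions and leaves the positions.
-/

namespace PFunctor

open Limits

def objPUnitEquiv (P : PFunctor.{u, u}) : P.Obj PUnit ≃ P.A where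
  toFun := Sigma.fst
  invFun a := ⟨a, fun _ => ⟨⟩⟩
  left_inv _ := rfl
  right_inv _ := rfl

section NatTrans

variable {P R : PFunctor.{u, u}} {X : Type u}

theorem obj_mk_eq_mk_iff {a a' : P.A} {g : P.B a → X} {g' : P.B a' → X} :
    (⟨a, g⟩ : P.Obj X) = ⟨a', g'⟩ ↔ ∃ h : a = a', ∀ b, g (cast (congrArg P.B h.symm) b) = g' b := by
  constructor
  · rintro ⟨⟩
    exact ⟨rfl, fun _ => rfl⟩
  · rintro ⟨rfl, h⟩
    exact congrArg _ (funext h)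

def natTransPos (τ : P.toFunctor ⟶ R.toFunctor) (a : P.A) : R.A :=
  (τ.app (P.B a) ⟨a, id⟩).1

def natTransDir (τ : P.toFunctor ⟶ R.toFunctor) (a : P.A) : R.B (natTransPos τ a) → P.B a :=
  (τ.app (P.B a) ⟨a, id⟩).2

/-- Yoneda: `τ` is determined by its values on the generic elements `⟨a, id⟩`. -/
theorem natTrans_app_mk (τ : P.toFunctor ⟶ R.toFunctor) (a : P.A) (g : P.B a → X) :
    τ.app X ⟨a, g⟩ = ⟨natTransPos τ a, g ∘ natTransDir τ a⟩ :=
  NatTrans.naturality_apply τ (TypeCat.ofHom g) (⟨a, id⟩ : P.Obj (P.B a))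

end NatTrans

section Limit

variable {J : Type u} [SmallCategory J] (F : J ⥤ Type u ⥤ Type u) (P : J → PFunctor.{u, u})
  (e : ∀ j, F.obj j ≅ (P j).toFunctor)

abbrev polyDiagram : J ⥤ Type u ⥤ Type u := F.copyObj (fun j => (P j).toFunctor) e

def LimitPos : Type u :=
  { a : ∀ j, (P j).A //
    ∀ ⦃j j'⦄ (f : j ⟶ j'), natTransPos ((polyDiagram F P e).map f) (a j) = a j' }

/-- The quotient by this relation is the colimit of the direction sets `(P j).B (a j)` along
the maps `natTransDir`; the `cast` is along the compatibility `a.2 f` of the positions. -/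
def LimitDirRel (a : LimitPos F P e) (z z' : Σ j, (P j).B (a.1 j)) : Prop :=
  ∃ f : z.1 ⟶ z'.1,
    z.2 = natTransDir ((polyDiagram F P e).map f) (a.1 z.1) (cast (congrArg _ (a.2 f).symm) z'.2)

def limitPFunctor : PFunctor.{u, u} := ⟨LimitPos F P e, fun a => Quot (LimitDirRel F P e a)⟩

def limitProj (j : J) : (limitPFunctor F P e).toFunctor ⟶ (P j).toFunctor where
  app X := TypeCat.ofHom fun x => ⟨x.1.1 j, fun b => x.2 (Quot.mk _ ⟨j, b⟩)⟩

def limitCone : Cone (polyDiagram F P e) where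
  pt := (limitPFunctor F P e).toFunctor
  π :=
    { app := limitProj F P e
      naturality := by
        intro j j' f
        ext X ⟨a, g⟩
        refine ((natTrans_app_mk _ _ _).trans (obj_mk_eq_mk_iff.2 ⟨a.2 f, fun b => ?_⟩)).symm
        exact congrArg g (Quot.sound ⟨f, rfl⟩) }

variable {F P e} {X : Type u}

theorem section_map_eq (s : (polyDiagram F P e ⋙ (evaluation _ _).obj X).sections)
    {j j' : J} (f : j ⟶ j') :
    (⟨natTransPos ((polyDiagram F P e).map f) (s.1 j).1,
      (s.1 j).2 ∘ natTransDir ((polyDiagram F P e).map f) (s.1 j).1⟩ : (P j').Obj X) = s.1 j' :=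
  (natTrans_app_mk _ _ _).symm.trans (s.2 f)

def limitObjOfSection (s : (polyDiagram F P e ⋙ (evaluation _ _).obj X).sections) :
    (limitPFunctor F P e).Obj X :=
  ⟨⟨fun j => (s.1 j).1, fun _ _ f => congrArg Sigma.fst (section_map_eq s f)⟩,
    Quot.lift (fun z => (s.1 z.1).2 z.2) (by
      rintro z z' ⟨f, hb⟩
      exact (congrArg _ hb).trans ((obj_mk_eq_mk_iff.1 (section_map_eq s f)).2 z'.2))⟩

variable (F P e X)

theorem sectionOfCone_limitCone_bijective :
    (Types.sectionOfCone (((evaluation _ _).obj X).mapCone (limitCone F P e))).Bijective := by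
  constructor
  · rintro ⟨a, g⟩ ⟨a', g'⟩ h
    have hj : ∀ j, (⟨a.1 j, fun b => g (Quot.mk _ ⟨j, b⟩)⟩ : (P j).Obj X) =
        ⟨a'.1 j, fun b => g' (Quot.mk _ ⟨j, b⟩)⟩ := fun j => congrFun (congrArg Subtype.val h) j
    obtain rfl : a = a' := Subtype.ext (funext fun j => congrArg Sigma.fst (hj j))
    refine congrArg _ (funext fun q => ?_)
    induction q using Quot.ind with
    | mk z => exact (obj_mk_eq_mk_iff.1 (hj z.1)).2 z.2
  · intro s
    exact ⟨limitObjOfSection s, rfl⟩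

noncomputable def isLimitLimitCone : IsLimit (limitCone F P e) :=
  evaluationJointlyReflectsLimits _ fun X =>
    ((Types.isLimit_iff_bijective_sectionOfCone _).2
      (sectionOfCone_limitCone_bijective F P e X)).some

noncomputable def limitIsoLimitPFunctor : limit F ≅ (limitPFunctor F P e).toFunctor :=
  HasLimit.isoOfNatIso (F.isoCopyObj _ e) ≪≫
    (limit.isLimit _).conePointUniqueUpToIso (isLimitLimitCone F P e)

end Limit

end PFunctor

open CategoryTheory.Limits in
/-- the category of polynomial functors has all small limits: a (pointwise) limit
of functors, each naturally isomorphic to a polynomial functor, is again naturally isomorphic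
to a polynomial functor, whose position set is the limit of the position sets. -/
theorem stmt_14 (J : Type u) [SmallCategory J] (D : J ⥤ Type u ⥤ Type u)
    (h : ∀ j : J, ∃ P : PFunctor.{u}, Nonempty (D.obj j ≅ P.toFunctor)) :
    ∃ Q : PFunctor.{u},
      Nonempty (limit D ≅ Q.toFunctor) ∧
      Nonempty (Q.A ≃ limit (D ⋙ (evaluation (Type u) (Type u)).obj PUnit)) := by
  choose P e using h
  let iso := PFunctor.limitIsoLimitPFunctor D P fun j => (e j).some
  refine ⟨_, ⟨iso⟩, ⟨?_⟩⟩
  exact (PFunctor.objPUnitEquiv _).symm.trans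
    ((iso.app PUnit).symm ≪≫ limitObjIsoLimitCompEvaluation D PUnit).toEquiv
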